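/- arXiv:2602.08114 — 5 statements merged into one kernel-verified Lean document; each statement's English description precedes it below -/
import Mathlib

section
/- Fix ω ∈ (0,1), β > 0, x ≥ 0, and let t₀ = min(e^{βx}, 1/(1−ω)). Then ω·ln(1 − (1−ω)·t₀·e^{−βx}) + (1−ω)·ln(t₀) ≤ −(1−ω)·ln(1−ω). -/
/-! No case split on which argument of the minimum is attained: `t₀ ≤ e^{βx}` keeps the argument
of the first logarithm in `[0, 1]`, so the first term is nonpositive, and `t₀ ≤ 1/(1−ω)` bounds the
second logarithm by `−ln(1−ω)`. -/

open Real

lemma min_exp_mul_exp_neg_le_one (a b : ℝ) : min (exp a) b * exp (-a) ≤ 1 := by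
  rw [exp_neg, ← div_eq_mul_inv, div_le_one (exp_pos a)]
  exact min_le_left _ _

lemma log_le_neg_log_of_le_one_div {t c : ℝ} (ht : 0 < t) (h : t ≤ 1 / c) :
    log t ≤ -log c := by
  rw [← log_inv, ← one_div]
  exact log_le_log ht h

theorem per_trial_objective_max_bound_general
    (w β x : ℝ) (hw : w ∈ Set.Ioo (0 : ℝ) 1) :
    w * Real.log (1 - (1 - w) * min (Real.exp (β * x)) (1 / (1 - w)) * Real.exp (-β * x)) +
        (1 - w) * Real.log (min (Real.exp (β * x)) (1 / (1 - w))) ≤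
      -(1 - w) * Real.log (1 - w) := by
  obtain ⟨hw0, hw1⟩ := hw
  set t₀ := min (exp (β * x)) (1 / (1 - w))
  have h1w : 0 < 1 - w := by linarith
  have ht₀ : 0 < t₀ := lt_min (exp_pos _) (by positivity)
  have hscaled : t₀ * exp (-β * x) ≤ 1 := by
    rw [neg_mul]
    exact min_exp_mul_exp_neg_le_one _ _
  have hscaled_nonneg : 0 ≤ t₀ * exp (-β * x) := by positivity
  have hfirst : log (1 - (1 - w) * t₀ * exp (-β * x)) ≤ 0 := by
    rw [mul_assoc]
    exact log_nonpos (by nlinarith) (by nlinarith)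
  have hsecond : log t₀ ≤ -log (1 - w) :=
    log_le_neg_log_of_le_one_div ht₀ (min_le_right _ _)
  linarith [mul_nonpos_of_nonneg_of_nonpos hw0.le hfirst,
    mul_le_mul_of_nonneg_left hsecond h1w.le]

/-- For `ω ∈ (0,1)`, `β > 0`, `x ≥ 0` and `t₀ = min(e^{βx}, 1/(1−ω))`,
`ω ln(1 − (1−ω) t₀ e^{−βx}) + (1−ω) ln t₀ ≤ −(1−ω) ln(1−ω)`. -/
theorem per_trial_objective_max_bound
    (w β x : ℝ) (hw : w ∈ Set.Ioo (0 : ℝ) 1) (hβ : 0 < β) (hx : 0 ≤ x) :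
    w * Real.log (1 - (1 - w) * min (Real.exp (β * x)) (1 / (1 - w)) * Real.exp (-β * x)) +
        (1 - w) * Real.log (min (Real.exp (β * x)) (1 / (1 - w))) ≤
      -(1 - w) * Real.log (1 - w) :=
  per_trial_objective_max_bound_general w β x hw
end

section
/- Let ω ∈ (0,1), β > 0, θ_e ≥ 0 with (1−ω)e^{βθ_e} < 1, and let X be a nonnegative random variable with mean θ and variance σ². Define B(z₀) = ω²e^{z₀}/(1 − (1−ω)e^{z₀})² and L = ω(ln ω − E(ln(1 − (1−ω)e^{−β(X−θ_e)}))) + β(1−ω)(θ − θ_e). Then 0 ≤ L ≤ (β²(1−ω)/(2ω))·B(βθ_e)·(σ² + (θ−θ_e)²). -/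
open MeasureTheory Real

/-!
With `t = β (X - θ_e)`, the gap is `L = E[g(t)]` for
`g(t) = ω (ln ω - ln (1 - (1-ω) e^{-t})) + (1-ω) t` (`trialGap ω t`).
Pointwise, `g ≥ 0` follows from `ln x ≤ x - 1` and `e^{-t} ≥ 1 - t`. For the upper bound,
`g(0) = g'(0) = 0` and `g''(t) = ω (1-ω) e^{-t} / (1 - (1-ω) e^{-t})²` is decreasing in `t`,
so on `t ≥ -β θ_e` (guaranteed by `X ≥ 0`) it is at most its value at `-β θ_e`, which gives
`g(t) ≤ (1-ω)/(2ω) · B(β θ_e) · t²`. Taking expectations and using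
`E[(X - θ_e)²] = σ² + (θ - θ_e)²` finishes the proof.
-/

section Taylor

variable {D : Set ℝ} {f f' f'' : ℝ → ℝ}

lemma monotoneOn_of_forall_hasDerivAt_nonneg (hD : Convex ℝ D)
    (hf : ∀ x ∈ D, HasDerivAt f (f' x) x) (hf' : ∀ x ∈ D, 0 ≤ f' x) : MonotoneOn f D :=
  monotoneOn_of_hasDerivWithinAt_nonneg hD
    (fun x hx => (hf x hx).continuousAt.continuousWithinAt)
    (fun x hx => (hf x (interior_subset hx)).hasDerivWithinAt)
    (fun x hx => hf' x (interior_subset hx))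

lemma antitoneOn_of_forall_hasDerivAt_nonpos (hD : Convex ℝ D)
    (hf : ∀ x ∈ D, HasDerivAt f (f' x) x) (hf' : ∀ x ∈ D, f' x ≤ 0) : AntitoneOn f D :=
  antitoneOn_of_hasDerivWithinAt_nonpos hD
    (fun x hx => (hf x hx).continuousAt.continuousWithinAt)
    (fun x hx => (hf x (interior_subset hx)).hasDerivWithinAt)
    (fun x hx => hf' x (interior_subset hx))

theorem le_half_mul_sq_of_hasDerivAt_of_le {M t : ℝ} (hD : Convex ℝ D) (h0 : 0 ∈ D)
    (hf : ∀ s ∈ D, HasDerivAt f (f' s) s) (hf' : ∀ s ∈ D, HasDerivAt f' (f'' s) s)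
    (hM : ∀ s ∈ D, f'' s ≤ M) (hf0 : f 0 = 0) (hf'0 : f' 0 = 0) (ht : t ∈ D) :
    f t ≤ M / 2 * t ^ 2 := by
  set g : ℝ → ℝ := fun s => M / 2 * s ^ 2 - f s
  have hg : ∀ s ∈ D, HasDerivAt g (M * s - f' s) s := fun s hs =>
    (((hasDerivAt_pow 2 s).const_mul (M / 2)).sub (hf s hs)).congr_deriv (by ring)
  -- `g'` is monotone and vanishes at `0`, so `g` decreases to `g 0 = 0` and then increases.
  have hg' : MonotoneOn (fun s => M * s - f' s) D :=
    monotoneOn_of_forall_hasDerivAt_nonneg hD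
      (fun s hs => (((hasDerivAt_id s).const_mul M).sub (hf' s hs)).congr_deriv (by simp))
      (fun s hs => sub_nonneg.2 (hM s hs))
  suffices g 0 ≤ g t by simpa [g, hf0] using this
  rcases le_total 0 t with ht0 | ht0
  · refine monotoneOn_of_forall_hasDerivAt_nonneg (hD.inter (convex_Ici 0))
      (fun s hs => hg s hs.1) (fun s hs => ?_) ⟨h0, Set.self_mem_Ici⟩ ⟨ht, ht0⟩ ht0
    simpa [hf'0] using hg' h0 hs.1 hs.2
  · refine antitoneOn_of_forall_hasDerivAt_nonpos (hD.inter (convex_Iic 0))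
      (fun s hs => hg s hs.1) (fun s hs => ?_) ⟨ht, ht0⟩ ⟨h0, Set.self_mem_Iic⟩ ht0
    simpa [hf'0] using hg' hs.1 h0 hs.2

end Taylor

noncomputable def trialGap (w t : ℝ) : ℝ :=
  w * (log w - log (1 - (1 - w) * exp (-t))) + (1 - w) * t

section TrialGap

variable {w t : ℝ}

lemma trialGap_zero : trialGap w 0 = 0 := by
  simp [trialGap]

lemma trialGap_nonneg (hw : 0 < w) (hw1 : w ≤ 1) (hA : 0 < 1 - (1 - w) * exp (-t)) :
    0 ≤ trialGap w t := by
  have hlog : log ((1 - (1 - w) * exp (-t)) / w) ≤ (1 - (1 - w) * exp (-t)) / w - 1 :=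
    log_le_sub_one_of_pos (div_pos hA hw)
  rw [log_div hA.ne' hw.ne', div_sub_one hw.ne', le_div_iff₀ hw] at hlog
  have hexp : 1 - t ≤ exp (-t) := by linarith [add_one_le_exp (-t)]
  unfold trialGap
  nlinarith [mul_le_mul_of_nonneg_left hexp (sub_nonneg.2 hw1)]

lemma one_sub_mul_exp_neg_pos (hw1 : w ≤ 1) {z : ℝ} (hfin : (1 - w) * exp z < 1)
    (ht : -z ≤ t) :
    0 < 1 - (1 - w) * exp (-t) := by
  have : (1 - w) * exp (-t) ≤ (1 - w) * exp z := by
    gcongr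
    linarith
  linarith

lemma hasDerivAt_trialGap (hA : 1 - (1 - w) * exp (-t) ≠ 0) :
    HasDerivAt (trialGap w) ((1 - w) * (1 - exp (-t)) / (1 - (1 - w) * exp (-t))) t := by
  have hA' : HasDerivAt (fun s => 1 - (1 - w) * exp (-s)) ((1 - w) * exp (-t)) t := by
    simpa using ((hasDerivAt_neg t).exp.const_mul (1 - w)).const_sub 1
  refine (((hA'.log hA).const_sub (log w)).const_mul w |>.add
    ((hasDerivAt_id t).const_mul (1 - w))).congr_deriv ?_
  field_simp
  ring

lemma hasDerivAt_deriv_trialGap (hA : 1 - (1 - w) * exp (-t) ≠ 0) :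
    HasDerivAt (fun s => (1 - w) * (1 - exp (-s)) / (1 - (1 - w) * exp (-s)))
      ((1 - w) * w * (exp (-t) / (1 - (1 - w) * exp (-t)) ^ 2)) t := by
  have hE : HasDerivAt (fun s => exp (-s)) (-exp (-t)) t := by
    simpa using (hasDerivAt_neg t).exp
  refine (((hE.const_sub 1).const_mul (1 - w)).div ((hE.const_mul (1 - w)).const_sub 1)
    hA).congr_deriv ?_
  field_simp
  ring

theorem trialGap_le (hw : 0 < w) (hw1 : w ≤ 1) {z : ℝ} (hz : 0 ≤ z)
    (hfin : (1 - w) * exp z < 1) (ht : -z ≤ t) :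
    trialGap w t ≤ ((1 - w) / (2 * w)) * (w ^ 2 * exp z / (1 - (1 - w) * exp z) ^ 2) * t ^ 2 := by
  have hA : ∀ s ∈ Set.Ici (-z), 0 < 1 - (1 - w) * exp (-s) := fun s hs =>
    one_sub_mul_exp_neg_pos hw1 hfin hs
  have hcurv : ∀ s ∈ Set.Ici (-z), (1 - w) * w * (exp (-s) / (1 - (1 - w) * exp (-s)) ^ 2) ≤
      (1 - w) * w * (exp z / (1 - (1 - w) * exp z) ^ 2) := fun s hs => by
    have : exp (-s) ≤ exp z := exp_le_exp.2 (by linarith [Set.mem_Ici.1 hs])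
    gcongr
  convert le_half_mul_sq_of_hasDerivAt_of_le (convex_Ici (-z)) (by simpa using hz)
    (fun s hs => hasDerivAt_trialGap (hA s hs).ne')
    (fun s hs => hasDerivAt_deriv_trialGap (hA s hs).ne') hcurv trialGap_zero (by simp) ht using 2
  field_simp

end TrialGap

section Integral

variable {Ω : Type*} {m0 : MeasurableSpace Ω} {μ : Measure Ω}

lemma integrable_sub_sq_of_integrable_sub_sq [IsFiniteMeasure μ] {X : Ω → ℝ} {θ : ℝ}
    (hX : Integrable X μ) (hX2 : Integrable (fun ω => (X ω - θ) ^ 2) μ) (c : ℝ) :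
    Integrable (fun ω => (X ω - c) ^ 2) μ := by
  have h : (fun ω => (X ω - c) ^ 2) =
      fun ω => (X ω - θ) ^ 2 + 2 * (θ - c) * (X ω - θ) + (θ - c) ^ 2 := by
    funext ω; ring
  rw [h]
  exact (hX2.add ((hX.sub (integrable_const θ)).const_mul _)).add (integrable_const _)

lemma integral_sub_sq_eq_add_sq [IsProbabilityMeasure μ] {X : Ω → ℝ} {θ : ℝ}
    (hX : Integrable X μ) (hmean : ∫ ω, X ω ∂μ = θ)
    (hX2 : Integrable (fun ω => (X ω - θ) ^ 2) μ) (c : ℝ) :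
    ∫ ω, (X ω - c) ^ 2 ∂μ = ∫ ω, (X ω - θ) ^ 2 ∂μ + (θ - c) ^ 2 := by
  have hXθ : Integrable (fun ω => X ω - θ) μ := hX.sub (integrable_const θ)
  have h : (fun ω => (X ω - c) ^ 2) =
      fun ω => (X ω - θ) ^ 2 + 2 * (θ - c) * (X ω - θ) + (θ - c) ^ 2 := by
    funext ω; ring
  have hlin : Integrable (fun ω => (X ω - θ) ^ 2 + 2 * (θ - c) * (X ω - θ)) μ :=
    hX2.add (hXθ.const_mul _)
  rw [h, integral_add hlin (integrable_const _), integral_add hX2 (hXθ.const_mul _),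
    integral_const_mul, integral_sub hX (integrable_const θ), hmean]
  simp

variable {w : ℝ} {T : Ω → ℝ}

lemma integrable_trialGap [IsFiniteMeasure μ] (hT : Integrable T μ)
    (hlog : Integrable (fun ω => log (1 - (1 - w) * exp (-T ω))) μ) :
    Integrable (fun ω => trialGap w (T ω)) μ :=
  (((integrable_const _).sub hlog).const_mul w).add (hT.const_mul (1 - w))

lemma integral_trialGap [IsProbabilityMeasure μ] (hT : Integrable T μ)
    (hlog : Integrable (fun ω => log (1 - (1 - w) * exp (-T ω))) μ) :
    ∫ ω, trialGap w (T ω) ∂μ = w * (log w - ∫ ω, log (1 - (1 - w) * exp (-T ω)) ∂μ) +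
      (1 - w) * ∫ ω, T ω ∂μ := by
  have hlog' : Integrable (fun ω => w * (log w - log (1 - (1 - w) * exp (-T ω)))) μ :=
    ((integrable_const _).sub hlog).const_mul w
  unfold trialGap
  rw [integral_add hlog' (hT.const_mul (1 - w)), integral_const_mul, integral_const_mul,
    integral_sub (integrable_const _) hlog]
  simp

end Integral

theorem per_trial_gap_bounds_general
    {Ω : Type*} {m0 : MeasurableSpace Ω} {μ : Measure Ω} [IsProbabilityMeasure μ]
    (w β θe θ σ : ℝ) (hw : w ∈ Set.Ioo (0 : ℝ) 1) (hβ : 0 < β) (hθe : 0 ≤ θe)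
    (hfin : (1 - w) * Real.exp (β * θe) < 1)
    (X : Ω → ℝ) (hXnonneg : ∀ ω, 0 ≤ X ω)
    (hXint : Integrable X μ) (hmean : ∫ ω, X ω ∂μ = θ)
    (hXsqint : Integrable (fun ω => (X ω - θ) ^ 2) μ)
    (hvar : ∫ ω, (X ω - θ) ^ 2 ∂μ = σ ^ 2)
    (hlogint : Integrable (fun ω => Real.log (1 - (1 - w) * Real.exp (-β * (X ω - θe)))) μ) :
    0 ≤ w * (Real.log w - ∫ ω, Real.log (1 - (1 - w) * Real.exp (-β * (X ω - θe))) ∂μ) +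
        β * (1 - w) * (θ - θe) ∧
      w * (Real.log w - ∫ ω, Real.log (1 - (1 - w) * Real.exp (-β * (X ω - θe))) ∂μ) +
          β * (1 - w) * (θ - θe) ≤
        (β ^ 2 * (1 - w) / (2 * w)) *
          (w ^ 2 * Real.exp (β * θe) / (1 - (1 - w) * Real.exp (β * θe)) ^ 2) *
          (σ ^ 2 + (θ - θe) ^ 2) := by
  obtain ⟨hw0, hw1⟩ := hw
  set T : Ω → ℝ := fun ω => β * (X ω - θe)
  have hT_ge : ∀ ω, -(β * θe) ≤ T ω := fun ω => by nlinarith [hXnonneg ω]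
  have hT : Integrable T μ := (hXint.sub (integrable_const θe)).const_mul β
  simp only [neg_mul] at hlogint ⊢
  have hL : ∫ ω, trialGap w (T ω) ∂μ =
      w * (log w - ∫ ω, log (1 - (1 - w) * exp (-T ω)) ∂μ) + β * (1 - w) * (θ - θe) := by
    rw [integral_trialGap hT hlogint, integral_const_mul, integral_sub hXint (integrable_const θe),
      hmean]
    simp only [integral_const, probReal_univ, smul_eq_mul, one_mul]
    ring
  rw [← hL]
  refine ⟨integral_nonneg fun ω =>
    trialGap_nonneg hw0 hw1.le (one_sub_mul_exp_neg_pos hw1.le hfin (hT_ge ω)), ?_⟩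
  calc ∫ ω, trialGap w (T ω) ∂μ
      ≤ ∫ ω, ((1 - w) / (2 * w)) *
          (w ^ 2 * exp (β * θe) / (1 - (1 - w) * exp (β * θe)) ^ 2) *
          (β ^ 2 * (X ω - θe) ^ 2) ∂μ := by
        refine integral_mono (integrable_trialGap hT hlogint)
          ((integrable_sub_sq_of_integrable_sub_sq hXint hXsqint θe).const_mul _ |>.const_mul _)
          fun ω => ?_
        simpa only [T, mul_pow] using trialGap_le hw0 hw1.le (by positivity) hfin (hT_ge ω)
    _ = _ := by
        rw [integral_const_mul, integral_const_mul,
          integral_sub_sq_eq_add_sq hXint hmean hXsqint, hvar]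
        ring

/-- Bounds on the per-trial gap contribution `L`: for `ω ∈ (0,1)`, `β > 0`, `θ_e ≥ 0`
with `(1−ω)e^{βθ_e} < 1`, and a nonnegative random variable `X` with mean `θ` and
variance `σ²`, with `B(z₀) = ω² e^{z₀}/(1 − (1−ω)e^{z₀})²`,
`0 ≤ L ≤ (β²(1−ω)/(2ω)) B(βθ_e) (σ² + (θ−θ_e)²)`. -/
theorem per_trial_gap_bounds
    {Ω : Type*} {m0 : MeasurableSpace Ω} {μ : Measure Ω} [IsProbabilityMeasure μ]
    (w β θe θ σ : ℝ) (hw : w ∈ Set.Ioo (0 : ℝ) 1) (hβ : 0 < β) (hθe : 0 ≤ θe)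
    (hfin : (1 - w) * Real.exp (β * θe) < 1)
    (X : Ω → ℝ) (hXmeas : Measurable X) (hXnonneg : ∀ ω, 0 ≤ X ω)
    (hXint : Integrable X μ) (hmean : ∫ ω, X ω ∂μ = θ)
    (hXsqint : Integrable (fun ω => (X ω - θ) ^ 2) μ)
    (hvar : ∫ ω, (X ω - θ) ^ 2 ∂μ = σ ^ 2)
    (hlogint : Integrable (fun ω => Real.log (1 - (1 - w) * Real.exp (-β * (X ω - θe)))) μ) :
    0 ≤ w * (Real.log w - ∫ ω, Real.log (1 - (1 - w) * Real.exp (-β * (X ω - θe))) ∂μ) +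
        β * (1 - w) * (θ - θe) ∧
      w * (Real.log w - ∫ ω, Real.log (1 - (1 - w) * Real.exp (-β * (X ω - θe))) ∂μ) +
          β * (1 - w) * (θ - θe) ≤
        (β ^ 2 * (1 - w) / (2 * w)) *
          (w ^ 2 * Real.exp (β * θe) / (1 - (1 - w) * Real.exp (β * θe)) ^ 2) *
          (σ ^ 2 + (θ - θe) ^ 2) :=
  per_trial_gap_bounds_general (m0 := m0) w β θe θ σ hw hβ hθe hfin X hXnonneg hXint hmean hXsqint
    hvar hlogint
end

section
/- Let ω ∈ (0,1) and v₀ ∈ (0,1). With v = (1−ω)v₀ + ω and z_u = ln((1 − vω)/(1−ω)), we have B(z_u) = (1 + ω(1−v₀))/((v₀ + ω(1−v₀))²) ≤ 1/v₀². In particular, with v₀ = 1/√2, B(z_u) ≤ 2. -/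
open Real

/-!
Since `ω < 1`, the cutoff is `z_u = log (1 + t)` with `t = ω(1 − v₀) ≥ 0`, so `e^{z_u} = 1 + t` and the
denominator `1 − (1 − ω)(1 + t)` factors as `ω(v₀ + t)`; the `ω²` cancels. The bound
`(1 + t)/(v₀ + t)² ≤ 1/v₀²` then reduces to `v₀² t ≤ 2 v₀ t + t²`.
-/

/-- The function `B(z) = ω² e^z / (1 − (1 − ω) e^z)²`. -/
noncomputable def cutoffB (w z : ℝ) : ℝ :=
  w ^ 2 * exp z / (1 - (1 - w) * exp z) ^ 2

lemma cutoffB_log {w A : ℝ} (hA : 0 < A) :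
    cutoffB w (log A) = w ^ 2 * A / (1 - (1 - w) * A) ^ 2 := by
  rw [cutoffB, exp_log hA]

lemma cutoff_arg_eq {w v₀ : ℝ} (hw : w ≠ 1) :
    (1 - ((1 - w) * v₀ + w) * w) / (1 - w) = 1 + w * (1 - v₀) := by
  rw [div_eq_iff (sub_ne_zero.mpr hw.symm)]
  ring

lemma cutoffB_log_one_add {w v₀ : ℝ} (hw : w ≠ 0) (hpos : 0 < 1 + w * (1 - v₀)) :
    cutoffB w (log (1 + w * (1 - v₀))) = (1 + w * (1 - v₀)) / (v₀ + w * (1 - v₀)) ^ 2 := by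
  have hden : 1 - (1 - w) * (1 + w * (1 - v₀)) = w * (v₀ + w * (1 - v₀)) := by ring
  rw [cutoffB_log hpos, hden, mul_pow, mul_div_mul_left _ _ (pow_ne_zero 2 hw)]

lemma one_add_div_add_sq_le {v t : ℝ} (hv : 0 < v) (hv2 : v ≤ 2) (ht : 0 ≤ t) :
    (1 + t) / (v + t) ^ 2 ≤ 1 / v ^ 2 := by
  rw [div_le_div_iff₀ (by positivity) (by positivity)]
  nlinarith [mul_nonneg (mul_nonneg hv.le (sub_nonneg.mpr hv2)) ht, sq_nonneg t]

/-- For `ω ∈ (0,1)`, `v₀ ∈ (0,1)`, with `v = (1−ω)v₀ + ω` and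
`z_u = ln((1 − vω)/(1−ω))`, the quantity `B(z_u) = ω² e^{z_u}/(1 − (1−ω)e^{z_u})²` equals
`(1 + ω(1−v₀))/((v₀ + ω(1−v₀))²)` and is at most `1/v₀²`; in particular, for `v₀ = 1/√2`,
`B(z_u) ≤ 2`. -/
theorem B_cutoff_bound
    (w v₀ : ℝ) (hw : w ∈ Set.Ioo (0 : ℝ) 1) (hv₀ : v₀ ∈ Set.Ioo (0 : ℝ) 1) :
    (w ^ 2 * Real.exp (Real.log ((1 - ((1 - w) * v₀ + w) * w) / (1 - w))) /
          (1 - (1 - w) * Real.exp (Real.log ((1 - ((1 - w) * v₀ + w) * w) / (1 - w)))) ^ 2 =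
        (1 + w * (1 - v₀)) / (v₀ + w * (1 - v₀)) ^ 2) ∧
      (w ^ 2 * Real.exp (Real.log ((1 - ((1 - w) * v₀ + w) * w) / (1 - w))) /
          (1 - (1 - w) * Real.exp (Real.log ((1 - ((1 - w) * v₀ + w) * w) / (1 - w)))) ^ 2 ≤
        1 / v₀ ^ 2) ∧
      (v₀ = 1 / Real.sqrt 2 →
        w ^ 2 * Real.exp (Real.log ((1 - ((1 - w) * v₀ + w) * w) / (1 - w))) /
            (1 - (1 - w) * Real.exp (Real.log ((1 - ((1 - w) * v₀ + w) * w) / (1 - w)))) ^ 2 ≤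
          2) := by
  obtain ⟨hw0, hw1⟩ := hw
  obtain ⟨hv0, hv1⟩ := hv₀
  have ht : 0 ≤ w * (1 - v₀) := mul_nonneg hw0.le (by linarith)
  have hB : cutoffB w (log ((1 - ((1 - w) * v₀ + w) * w) / (1 - w))) =
      (1 + w * (1 - v₀)) / (v₀ + w * (1 - v₀)) ^ 2 := by
    rw [cutoff_arg_eq hw1.ne, cutoffB_log_one_add hw0.ne' (by linarith)]
  have hle : (1 + w * (1 - v₀)) / (v₀ + w * (1 - v₀)) ^ 2 ≤ 1 / v₀ ^ 2 :=
    one_add_div_add_sq_le hv0 (by linarith) ht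
  change cutoffB w _ = _ ∧ cutoffB w _ ≤ _ ∧ (_ → cutoffB w _ ≤ 2)
  rw [hB]
  refine ⟨rfl, hle, fun hv => ?_⟩
  have hinv : 1 / v₀ ^ 2 = 2 := by
    rw [hv, one_div_pow, sq_sqrt zero_le_two, one_div_one_div]
  exact hinv ▸ hle
end

section
/- Let n, m be positive integers, ω ∈ (0,1), γ > 0, and let C_n be a binomial random variable with parameters n and 1−ω (counting unchecked trials). If n ≥ (m/(1−ω))·(1 + (γ + √(γ² + 8m(1−ω)γ))/(4m(1−ω))), then P(C_n < m) ≤ e^{−γ}. -/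
open MeasureTheory ProbabilityTheory Real Finset unitInterval

/-!
Chernoff's method: for `t ≥ 0`, weighting the terms `k < m` of the binomial law by
`e^{t(m-k)} ≥ 1` and extending to all `k ≤ n` bounds `P(C_n < m)` by `e^{tm} (p e^{-t} + q)^n`, and
Hoeffding's lemma for a Bernoulli variable gives `p e^{-t} + q ≤ e^{-pt + t²/8}`. With
`d = np - m` and the optimal `t = 4d/n` this is Hoeffding's inequality `P(C_n < m) ≤ e^{-2d²/n}`.
The stated lower bound on `n` says exactly that `d` lies beyond the larger root of
`2p d² - γ d - γ m`, i.e. that `γ n ≤ 2 d²`.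
-/

theorem hoeffding_lemma_bernoulli {p q : ℝ} (hp : 0 ≤ p) (hq : 0 ≤ q) (hpq : p + q = 1) (t : ℝ) :
    p * exp (-t) + q ≤ exp (-(p * t) + t ^ 2 / 8) := by
  obtain rfl : q = 1 - p := by linarith
  let pI : I := ⟨p, hp, by linarith⟩
  let X : Bool → ℝ := fun b => cond b 1 0
  have hmean : ∫ b, X b ∂Ber(true, false, pI) = p := by
    simp [integral_bernoulliMeasure, pI, X]
  have hmgf := (hasSubgaussianMGF_of_mem_Icc (X := X) (μ := Ber(true, false, pI)) (a := 0)
    (b := 1) Measurable.of_discrete.aemeasurable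
    (ae_of_all _ fun b => by cases b <;> simp [X])).mgf_le (-t)
  simp only [mgf, hmean, integral_bernoulliMeasure, pI, X] at hmgf
  norm_num at hmgf
  calc p * exp (-t) + (1 - p)
      = exp (-(p * t)) * (p * exp (-(t * (1 - p))) + (1 - p) * exp (t * p)) := by
        have h₁ : -(p * t) + -(t * (1 - p)) = -t := by ring
        have h₂ : -(p * t) + t * p = 0 := by ring
        rw [mul_add, mul_left_comm, ← exp_add, h₁, mul_left_comm, ← exp_add, h₂, exp_zero,
          mul_one]
    _ ≤ exp (-(p * t)) * exp (t ^ 2 / 8) := by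
        gcongr
        exact hmgf.trans_eq (by ring_nf)
    _ = exp (-(p * t) + t ^ 2 / 8) := (exp_add _ _).symm

theorem sum_range_choose_mul_pow_le {p q t : ℝ} (hp : 0 ≤ p) (hq : 0 ≤ q) (ht : 0 ≤ t)
    (n m : ℕ) :
    ∑ k ∈ range m, (n.choose k : ℝ) * p ^ k * q ^ (n - k) ≤
      exp (t * m) * (p * exp (-t) + q) ^ n := by
  set f : ℕ → ℝ := fun k => n.choose k * p ^ k * q ^ (n - k) * exp (t * (m - k))
  have hf : ∀ k, 0 ≤ f k := fun k => by positivity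
  calc ∑ k ∈ range m, (n.choose k : ℝ) * p ^ k * q ^ (n - k)
      ≤ ∑ k ∈ range m, f k := by
        refine sum_le_sum fun k hk => le_mul_of_one_le_right (by positivity) (one_le_exp ?_)
        have : (k : ℝ) ≤ m := by exact_mod_cast (mem_range.1 hk).le
        nlinarith
    _ ≤ ∑ k ∈ range (max m (n + 1)), f k :=
        sum_le_sum_of_subset_of_nonneg (range_subset_range.2 (le_max_left _ _))
          fun k _ _ => hf k
    _ = ∑ k ∈ range (n + 1), f k := by
        refine (sum_subset (range_subset_range.2 (le_max_right _ _)) fun k _ hk => ?_).symm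
        simp [f, Nat.choose_eq_zero_of_lt (show n < k by simpa using hk)]
    _ = exp (t * m) * (p * exp (-t) + q) ^ n := by
        rw [add_pow, mul_sum]
        refine sum_congr rfl fun k _ => ?_
        have : exp (t * (m - k)) = exp (t * m) * exp (-t) ^ k := by
          rw [← exp_nat_mul, ← exp_add]
          ring_nf
        simp only [f, this, mul_pow]
        ring

theorem binomial_lower_tail_le {p q : ℝ} (hp : 0 ≤ p) (hq : 0 ≤ q) (hpq : p + q = 1)
    {n m : ℕ} (hn : 0 < n) (hmn : (m : ℝ) ≤ n * p) :
    ∑ k ∈ range m, (n.choose k : ℝ) * p ^ k * q ^ (n - k) ≤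
      exp (-(2 * (n * p - m) ^ 2 / n)) := by
  have hn' : (0 : ℝ) < n := by exact_mod_cast hn
  set t := 4 * (n * p - m) / n
  have ht : 0 ≤ t := div_nonneg (by linarith) hn'.le
  calc ∑ k ∈ range m, (n.choose k : ℝ) * p ^ k * q ^ (n - k)
      ≤ exp (t * m) * (p * exp (-t) + q) ^ n := sum_range_choose_mul_pow_le hp hq ht n m
    _ ≤ exp (t * m) * exp (-(p * t) + t ^ 2 / 8) ^ n := by
        gcongr
        exact hoeffding_lemma_bernoulli hp hq hpq t
    _ = exp (-(2 * (n * p - m) ^ 2 / n)) := by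
        rw [← exp_nat_mul, ← exp_add]
        congr 1
        simp only [t]
        field_simp
        ring

theorem quadratic_nonneg_of_root_le {a b c x : ℝ} (ha : 0 < a) (hD : 0 ≤ b ^ 2 + 4 * a * c)
    (hx : (b + √(b ^ 2 + 4 * a * c)) / (2 * a) ≤ x) :
    0 ≤ a * x ^ 2 - b * x - c := by
  have hs := sq_sqrt hD
  have hx' : b + √(b ^ 2 + 4 * a * c) ≤ 2 * a * x := (div_le_iff₀' (by positivity)).1 hx
  nlinarith [sqrt_nonneg (b ^ 2 + 4 * a * c)]

theorem le_mul_and_mul_le_two_sq_of_threshold {p γ : ℝ} {n m : ℕ} (hp : 0 < p) (hm : 0 < m)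
    (hγ : 0 ≤ γ)
    (h : ((m : ℝ) / p) * (1 + (γ + √(γ ^ 2 + 8 * m * p * γ)) / (4 * m * p)) ≤ n) :
    (m : ℝ) ≤ n * p ∧ γ * n ≤ 2 * (n * p - m) ^ 2 := by
  set s := √(γ ^ 2 + 8 * m * p * γ)
  have hd : m + (γ + s) / (4 * p) ≤ n * p := by
    have := mul_le_mul_of_nonneg_right h hp.le
    rwa [show (m : ℝ) / p * (1 + (γ + s) / (4 * m * p)) * p = m + (γ + s) / (4 * p) by
      field_simp] at this
  have hquad := quadratic_nonneg_of_root_le (a := 2 * p) (b := γ) (c := γ * m) (x := n * p - m)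
    (by positivity) (by positivity) (by
      rw [show γ ^ 2 + 4 * (2 * p) * (γ * m) = γ ^ 2 + 8 * m * p * γ by ring,
        show 2 * (2 * p) = 4 * p by ring]
      linarith)
  have hmn : (m : ℝ) ≤ n * p := le_of_add_le_of_nonneg_left hd (by positivity)
  refine ⟨hmn, le_of_mul_le_mul_right ?_ hp⟩
  nlinarith

theorem measure_setOf_lt_le_sum {Ω : Type*} {m0 : MeasurableSpace Ω} (μ : Measure Ω)
    (C : Ω → ℕ) (m : ℕ) :
    μ {ω | C ω < m} ≤ ∑ k ∈ range m, μ {ω | C ω = k} := by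
  have : {ω | C ω < m} = ⋃ k ∈ range m, {ω | C ω = k} := by ext; simp
  rw [this]
  exact measure_biUnion_finset_le _ _

theorem early_stopping_failure_bound_general
    {Ω : Type*} {m0 : MeasurableSpace Ω} {μ : Measure Ω}
    (n m : ℕ) (hm : 0 < m) (w γ : ℝ) (hw : w ∈ Set.Ioo (0 : ℝ) 1)
    (hγ : 0 < γ) (C : Ω → ℕ)
    (hbinom : ∀ k : ℕ, μ {ω | C ω = k} =
      ENNReal.ofReal ((n.choose k : ℝ) * (1 - w) ^ k * w ^ (n - k)))
    (hn_large : ((m : ℝ) / (1 - w)) *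
        (1 + (γ + Real.sqrt (γ ^ 2 + 8 * m * (1 - w) * γ)) / (4 * m * (1 - w))) ≤ n) :
    μ {ω | C ω < m} ≤ ENNReal.ofReal (Real.exp (-γ)) := by
  obtain ⟨hw₀, hw₁⟩ := hw
  have hp : 0 < 1 - w := sub_pos.2 hw₁
  obtain ⟨hmn, hγn⟩ := le_mul_and_mul_le_two_sq_of_threshold hp hm hγ.le hn_large
  have hn : 0 < n := by
    have : (0 : ℝ) < n * (1 - w) := (Nat.cast_pos.2 hm).trans_le hmn
    exact_mod_cast pos_of_mul_pos_left this hp.le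
  calc μ {ω | C ω < m} ≤ ∑ k ∈ range m, μ {ω | C ω = k} := measure_setOf_lt_le_sum μ C m
    _ = ENNReal.ofReal (∑ k ∈ range m, (n.choose k : ℝ) * (1 - w) ^ k * w ^ (n - k)) := by
        rw [ENNReal.ofReal_sum_of_nonneg fun k _ => by positivity]
        exact sum_congr rfl fun k _ => hbinom k
    _ ≤ ENNReal.ofReal (exp (-γ)) := by
        refine ENNReal.ofReal_le_ofReal ((binomial_lower_tail_le hp.le hw₀.le (by ring) hn
          hmn).trans (exp_le_exp.2 (neg_le_neg ?_)))
        rwa [le_div_iff₀ (by exact_mod_cast hn)]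

/-- Early-stopping trial count: if `C_n` is binomial with parameters `n` and `1−ω`, and
`n ≥ (m/(1−ω))(1 + (γ + √(γ² + 8m(1−ω)γ))/(4m(1−ω)))`, then `P(C_n < m) ≤ e^{−γ}`. -/
theorem early_stopping_failure_bound
    {Ω : Type*} {m0 : MeasurableSpace Ω} {μ : Measure Ω} [IsProbabilityMeasure μ]
    (n m : ℕ) (hn : 0 < n) (hm : 0 < m) (w γ : ℝ) (hw : w ∈ Set.Ioo (0 : ℝ) 1)
    (hγ : 0 < γ) (C : Ω → ℕ) (hCmeas : Measurable C)
    (hbinom : ∀ k : ℕ, μ {ω | C ω = k} =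
      ENNReal.ofReal ((n.choose k : ℝ) * (1 - w) ^ k * w ^ (n - k)))
    (hn_large : ((m : ℝ) / (1 - w)) *
        (1 + (γ + Real.sqrt (γ ^ 2 + 8 * m * (1 - w) * γ)) / (4 * m * (1 - w))) ≤ n) :
    μ {ω | C ω < m} ≤ ENNReal.ofReal (Real.exp (-γ)) :=
  early_stopping_failure_bound_general (m0 := m0) n m hm w γ hw hγ C hbinom hn_large
end

section
/- Let ω ∈ (0,1), β > 0, t ∈ [0, 1/(1−ω)], b = 0, and let X be a nonnegative random variable with finite mean. Suppose E(T₀) ≤ 1 where T₀ = (1−Y)(1 − (1−ω)t e^{−βX})/ω + Y t, Y independent of X with P(Y=0) = ω. If instead Y' is independent of X with P(Y'=0) = ω − δ for δ ∈ [0, ω), then E of the same functional with Y' in place of Y is at most 1 + δ(t−1)/ω. -/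
open MeasureTheory ProbabilityTheory Real

/-!
Write `f(X) = 1 - (1 - w) t e^{-βX}`. Both expectations are affine in the probability `p` of
the event `{Y = 0}`: by independence, `E[(1 - Y) f(X) / w + Y t] = p E[f(X)] / w + (1 - p) t`.
Since `X ≥ 0` and `β > 0`, `f(X)` is bounded, hence integrable. The hypothesis at `p = w`
bounds `E[f(X)]` by `1 - (1 - w) t`, and substituting this bound at `p = w - δ ≥ 0` gives
exactly `1 + δ (t - 1) / w`.
-/

section ZeroOneValued

variable {Ω : Type*} {m0 : MeasurableSpace Ω} {μ : Measure Ω} {Y : Ω → ℝ}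

lemma one_sub_eq_indicator_of_forall_eq_zero_or_eq_one (hY : ∀ ω, Y ω = 0 ∨ Y ω = 1) :
    (fun ω => 1 - Y ω) = {ω | Y ω = 0}.indicator 1 := by
  funext ω
  rcases hY ω with h | h <;> simp [h]

lemma integral_one_sub_of_forall_eq_zero_or_eq_one (hYmeas : Measurable Y)
    (hY : ∀ ω, Y ω = 0 ∨ Y ω = 1) :
    ∫ ω, (1 - Y ω) ∂μ = μ.real {ω | Y ω = 0} := by
  rw [one_sub_eq_indicator_of_forall_eq_zero_or_eq_one hY]
  exact integral_indicator_one (hYmeas (measurableSet_singleton 0))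

lemma ProbabilityTheory.IndepFun.one_sub_left {f : Ω → ℝ} (hind : IndepFun Y f μ) :
    IndepFun (fun ω => 1 - Y ω) f μ :=
  hind.comp (measurable_const.sub measurable_id) measurable_id

lemma integral_one_sub_mul_of_indepFun {f : Ω → ℝ} (hYmeas : Measurable Y)
    (hY : ∀ ω, Y ω = 0 ∨ Y ω = 1) (hf : AEStronglyMeasurable f μ) (hind : IndepFun Y f μ) :
    ∫ ω, (1 - Y ω) * f ω ∂μ = μ.real {ω | Y ω = 0} * ∫ ω, f ω ∂μ := by
  rw [hind.one_sub_left.integral_fun_mul_eq_mul_integral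
      (measurable_const.sub hYmeas).aestronglyMeasurable hf,
    integral_one_sub_of_forall_eq_zero_or_eq_one hYmeas hY]

lemma integrable_of_forall_eq_zero_or_eq_one [IsFiniteMeasure μ] (hYmeas : Measurable Y)
    (hY : ∀ ω, Y ω = 0 ∨ Y ω = 1) : Integrable Y μ :=
  (integrable_const (1 : ℝ)).mono' hYmeas.aestronglyMeasurable
    (ae_of_all _ fun ω => by rcases hY ω with h | h <;> simp [h])

variable [IsProbabilityMeasure μ]

lemma integral_of_forall_eq_zero_or_eq_one (hYmeas : Measurable Y)
    (hY : ∀ ω, Y ω = 0 ∨ Y ω = 1) :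
    ∫ ω, Y ω ∂μ = 1 - μ.real {ω | Y ω = 0} := by
  rw [← integral_one_sub_of_forall_eq_zero_or_eq_one hYmeas hY,
    integral_sub (integrable_const 1) (integrable_of_forall_eq_zero_or_eq_one hYmeas hY)]
  simp

lemma integral_one_sub_mul_div_add_mul_of_indepFun {f : Ω → ℝ} (w t : ℝ)
    (hYmeas : Measurable Y) (hY : ∀ ω, Y ω = 0 ∨ Y ω = 1) (hf : Integrable f μ)
    (hind : IndepFun Y f μ) :
    ∫ ω, ((1 - Y ω) * f ω / w + Y ω * t) ∂μ =
      μ.real {ω | Y ω = 0} * (∫ ω, f ω ∂μ) / w + (1 - μ.real {ω | Y ω = 0}) * t := by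
  have hprod : Integrable (fun ω => (1 - Y ω) * f ω) μ :=
    hind.one_sub_left.integrable_mul
      ((integrable_const 1).sub (integrable_of_forall_eq_zero_or_eq_one hYmeas hY)) hf
  rw [integral_add (hprod.div_const w)
      ((integrable_of_forall_eq_zero_or_eq_one hYmeas hY).mul_const t),
    integral_div, integral_mul_const, integral_one_sub_mul_of_indepFun hYmeas hY
      hf.aestronglyMeasurable hind, integral_of_forall_eq_zero_or_eq_one hYmeas hY]

end ZeroOneValued

lemma integrable_exp_neg_mul_of_nonneg {Ω : Type*} {m0 : MeasurableSpace Ω} {μ : Measure Ω}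
    [IsFiniteMeasure μ] {X : Ω → ℝ} {β : ℝ} (hβ : 0 ≤ β) (hXmeas : Measurable X)
    (hX : ∀ ω, 0 ≤ X ω) : Integrable (fun ω => exp (-β * X ω)) μ :=
  (integrable_const (1 : ℝ)).mono' (by fun_prop) (ae_of_all _ fun ω => by
    rw [norm_of_nonneg (exp_nonneg _), exp_le_one_iff, neg_mul, neg_nonpos]
    exact mul_nonneg hβ (hX ω))

lemma mixture_le_of_bias {w t δ I : ℝ} (hw : 0 < w) (hδ : δ ≤ w)
    (h : w * I / w + (1 - w) * t ≤ 1) :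
    (w - δ) * I / w + (1 - (w - δ)) * t ≤ 1 + δ * (t - 1) / w := by
  have hI : I - (1 - (1 - w) * t) ≤ 0 := by
    rw [mul_div_cancel_left₀ _ hw.ne'] at h
    linarith
  have hgap : (w - δ) * I / w + (1 - (w - δ)) * t - (1 + δ * (t - 1) / w) =
      (w - δ) * (I - (1 - (1 - w) * t)) / w := by
    field_simp
    ring
  have : (w - δ) * (I - (1 - (1 - w) * t)) / w ≤ 0 :=
    div_nonpos_of_nonpos_of_nonneg (mul_nonpos_of_nonneg_of_nonpos (by linarith) hI) hw.le
  linarith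

theorem estimation_factor_bias_bound_general
    {Ω : Type*} {m0 : MeasurableSpace Ω} {μ : Measure Ω} [IsProbabilityMeasure μ]
    (w β t δ : ℝ) (hw : w ∈ Set.Ioo (0 : ℝ) 1) (hβ : 0 < β)
    (hδ : δ ∈ Set.Ico (0 : ℝ) w)
    (X Y Y' : Ω → ℝ) (hXmeas : Measurable X) (hYmeas : Measurable Y)
    (hY'meas : Measurable Y') (hXnonneg : ∀ ω, 0 ≤ X ω)
    (hYvals : ∀ ω, Y ω = 0 ∨ Y ω = 1) (hY'vals : ∀ ω, Y' ω = 0 ∨ Y' ω = 1)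
    (hYindep : IndepFun Y X μ) (hY'indep : IndepFun Y' X μ)
    (hYprob : μ {ω | Y ω = 0} = ENNReal.ofReal w)
    (hY'prob : μ {ω | Y' ω = 0} = ENNReal.ofReal (w - δ))
    (hT₀ : ∫ ω, ((1 - Y ω) * (1 - (1 - w) * t * Real.exp (-β * X ω)) / w + Y ω * t) ∂μ ≤ 1) :
    ∫ ω, ((1 - Y' ω) * (1 - (1 - w) * t * Real.exp (-β * X ω)) / w + Y' ω * t) ∂μ ≤
      1 + δ * (t - 1) / w := by
  have hg : Measurable fun x : ℝ => 1 - (1 - w) * t * exp (-β * x) := by fun_prop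
  have hf : Integrable (fun ω => 1 - (1 - w) * t * exp (-β * X ω)) μ :=
    (integrable_const 1).sub
      ((integrable_exp_neg_mul_of_nonneg hβ.le hXmeas hXnonneg).const_mul _)
  have hp : μ.real {ω | Y ω = 0} = w := by
    rw [measureReal_def, hYprob, ENNReal.toReal_ofReal hw.1.le]
  have hp' : μ.real {ω | Y' ω = 0} = w - δ := by
    rw [measureReal_def, hY'prob, ENNReal.toReal_ofReal (sub_nonneg.2 hδ.2.le)]
  rw [integral_one_sub_mul_div_add_mul_of_indepFun w t hYmeas hYvals hf
    (hYindep.comp measurable_id hg), hp] at hT₀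
  rw [integral_one_sub_mul_div_add_mul_of_indepFun w t hY'meas hY'vals hf
    (hY'indep.comp measurable_id hg), hp']
  exact mixture_le_of_bias hw.1 hδ.2.le hT₀

/-- Bias robustness of estimation factors: with
`T₀ = (1−Y)(1 − (1−ω) t e^{−βX})/ω + Y t` satisfying `E(T₀) ≤ 1` for a 0/1-valued `Y`
independent of `X ≥ 0` with `P(Y=0) = ω`, replacing `Y` by a 0/1-valued `Y'` independent of
`X` with `P(Y'=0) = ω − δ`, `δ ∈ [0, ω)`, gives expectation at most `1 + δ(t−1)/ω`. -/
theorem estimation_factor_bias_bound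
    {Ω : Type*} {m0 : MeasurableSpace Ω} {μ : Measure Ω} [IsProbabilityMeasure μ]
    (w β t δ : ℝ) (hw : w ∈ Set.Ioo (0 : ℝ) 1) (hβ : 0 < β)
    (ht : t ∈ Set.Icc (0 : ℝ) (1 / (1 - w))) (hδ : δ ∈ Set.Ico (0 : ℝ) w)
    (X Y Y' : Ω → ℝ) (hXmeas : Measurable X) (hYmeas : Measurable Y)
    (hY'meas : Measurable Y') (hXnonneg : ∀ ω, 0 ≤ X ω)
    (hYvals : ∀ ω, Y ω = 0 ∨ Y ω = 1) (hY'vals : ∀ ω, Y' ω = 0 ∨ Y' ω = 1)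
    (hYindep : IndepFun Y X μ) (hY'indep : IndepFun Y' X μ)
    (hYprob : μ {ω | Y ω = 0} = ENNReal.ofReal w)
    (hY'prob : μ {ω | Y' ω = 0} = ENNReal.ofReal (w - δ))
    (hT₀ : ∫ ω, ((1 - Y ω) * (1 - (1 - w) * t * Real.exp (-β * X ω)) / w + Y ω * t) ∂μ ≤ 1) :
    ∫ ω, ((1 - Y' ω) * (1 - (1 - w) * t * Real.exp (-β * X ω)) / w + Y' ω * t) ∂μ ≤
      1 + δ * (t - 1) / w :=
  estimation_factor_bias_bound_general (m0 := m0) w β t δ hw hβ hδ X Y Y' hXmeas hYmeas hY'meas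
    hXnonneg hYvals hY'vals hYindep hY'indep hYprob hY'prob hT₀
end
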